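/- arXiv:2402.07194 — 2 statements merged into one kernel-verified Lean document; each statement's English description precedes it below -/
import Mathlib

section
/- For integers n, m ≥ 3, the strong metric dimension of the modular product satisfies dim_s(K_{n,n}^{−M} ⋄ K_{m,m}^{−M}) = 3nm. -/
open SimpleGraph

/-- The closed neighborhood `N[v]` of a vertex. -/
def closedNbr {α : Type*} (G : SimpleGraph α) (v : α) : Set α :=
  insert v (G.neighborSet v)

/-- The modular product `G ⋄ H`. -/
def modularProduct {α β : Type*} (G : SimpleGraph α) (H : SimpleGraph β) :
    SimpleGraph (α × β) :=
  SimpleGraph.fromRel (fun x y =>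
    (x.1 = y.1 ∧ H.Adj x.2 y.2) ∨
    (G.Adj x.1 y.1 ∧ x.2 = y.2) ∨
    (G.Adj x.1 y.1 ∧ H.Adj x.2 y.2) ∨
    (x.1 ≠ y.1 ∧ x.2 ≠ y.2 ∧ ¬ G.Adj x.1 y.1 ∧ ¬ H.Adj x.2 y.2))

/-- `{g, g'}` is a `γ_G`-pair: the closed neighborhoods are disjoint and cover `V(G)`. -/
def gammaPair {α : Type*} (G : SimpleGraph α) (g g' : α) : Prop :=
  closedNbr G g ∩ closedNbr G g' = ∅ ∧ closedNbr G g ∪ closedNbr G g' = Set.univ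

/-- A universal vertex. -/
def IsUniversal {α : Type*} (G : SimpleGraph α) (v : α) : Prop :=
  closedNbr G v = Set.univ

/-- A complete graph: every two distinct vertices are adjacent. -/
def IsCompleteGraph {α : Type*} (G : SimpleGraph α) : Prop :=
  ∀ u v : α, u ≠ v → G.Adj u v

/-- `G` is a disjoint union of two cliques. -/
def TwoCliques {α : Type*} (G : SimpleGraph α) : Prop :=
  ∃ A B : Set α, A.Nonempty ∧ B.Nonempty ∧ A ∪ B = Set.univ ∧ A ∩ B = ∅ ∧
    (∀ u ∈ A, ∀ v ∈ A, u ≠ v → G.Adj u v) ∧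
    (∀ u ∈ B, ∀ v ∈ B, u ≠ v → G.Adj u v) ∧
    (∀ u ∈ A, ∀ v ∈ B, ¬ G.Adj u v)

/-- `u` and `v` are mutually maximally distant in `X`. -/
def MMD {α : Type*} (X : SimpleGraph α) (u v : α) : Prop :=
  (∀ w, X.Adj u w → X.edist w v ≤ X.edist u v) ∧
  (∀ w, X.Adj v w → X.edist w u ≤ X.edist u v)

/-- A strong resolving set of `X`. -/
def IsStrongResolvingSet {α : Type*} (X : SimpleGraph α) (S : Set α) : Prop :=
  ∀ u v : α, u ≠ v → ∃ w ∈ S,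
    X.dist u w = X.dist u v + X.dist v w ∨ X.dist v w = X.dist v u + X.dist u w

/-- The strong metric dimension of `X`. -/
noncomputable def sdim {α : Type*} (X : SimpleGraph α) : ℕ :=
  sInf {n | ∃ S : Set α, S.ncard = n ∧ IsStrongResolvingSet X S}

/-- The star `K_{1,n}`: the center is `none`, the leaves are `some i`. -/
def starGraph (n : ℕ) : SimpleGraph (Option (Fin n)) :=
  SimpleGraph.fromRel (fun u v => u = none ∧ v ≠ none)

/-- The vertex cover number `β(X)`. -/
noncomputable def vertexCoverNumber {γ : Type*} (X : SimpleGraph γ) : ℕ :=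
  sInf {n | ∃ C : Set γ, C.ncard = n ∧ ∀ u v, X.Adj u v → u ∈ C ∨ v ∈ C}


/-- `K_{n,n}^{-M}`: the complete bipartite graph `K_{n,n}` minus a perfect matching. -/
def bipMinusM (n : ℕ) : SimpleGraph (Fin n ⊕ Fin n) :=
  SimpleGraph.fromRel (fun u v => ∃ i j : Fin n, i ≠ j ∧ u = Sum.inl i ∧ v = Sum.inr j)

namespace SdimAux

open Sum

def code {k : ℕ} : (Fin k ⊕ Fin k) → (Fin k ⊕ Fin k) → ℕ
  | inl i, inl j => if i = j then 0 else 2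
  | inr i, inr j => if i = j then 0 else 2
  | inl i, inr j => if i = j then 3 else 1
  | inr i, inl j => if i = j then 3 else 1

lemma code_comm {k : ℕ} (u v : Fin k ⊕ Fin k) : code u v = code v u := by
  rcases u with i | i <;> rcases v with j | j <;> simp [code, eq_comm]

lemma code_self {k : ℕ} (u : Fin k ⊕ Fin k) : code u u = 0 := by
  rcases u with i | i <;> simp [code]

lemma code_eq_zero_iff {k : ℕ} {u v : Fin k ⊕ Fin k} : code u v = 0 ↔ u = v := by
  rcases u with i | i <;> rcases v with j | j <;> simp [code] <;> split_ifs <;> simp_all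

lemma code_le_three {k : ℕ} (u v : Fin k ⊕ Fin k) : code u v ≤ 3 := by
  rcases u with i | i <;> rcases v with j | j <;> simp only [code] <;> split <;> omega

lemma code_swap {k : ℕ} (u v : Fin k ⊕ Fin k) : code u (Sum.swap v) = 3 - code u v := by
  rcases u with i | i <;> rcases v with j | j <;> simp only [code, Sum.swap_inl, Sum.swap_inr] <;>
    split <;> simp_all

lemma code_swap_left {k : ℕ} (u v : Fin k ⊕ Fin k) : code (Sum.swap u) v = 3 - code u v := by
  rw [code_comm, code_swap, code_comm]

lemma code_eq_three_iff {k : ℕ} {u v : Fin k ⊕ Fin k} : code u v = 3 ↔ v = Sum.swap u := by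
  rcases u with i | i <;> rcases v with j | j <;>
    simp only [code, Sum.swap_inl, Sum.swap_inr] <;> split <;> simp_all [eq_comm]

lemma bip_adj {k : ℕ} (u v : Fin k ⊕ Fin k) : (bipMinusM k).Adj u v ↔ code u v = 1 := by
  rw [bipMinusM, SimpleGraph.fromRel_adj]
  rcases u with i | i <;> rcases v with j | j <;> simp [code] <;> first
    | (split_ifs <;> simp_all)
    | tauto

lemma fin_exists_ne {k : ℕ} (hk : 3 ≤ k) (i i' : Fin k) : ∃ j : Fin k, j ≠ i ∧ j ≠ i' := by
  have h0 : (0 : ℕ) < k := by omega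
  have h1 : (1 : ℕ) < k := by omega
  have h2 : (2 : ℕ) < k := by omega
  set a : Fin k := ⟨0, h0⟩ with hadef
  set b : Fin k := ⟨1, h1⟩ with hbdef
  set c : Fin k := ⟨2, h2⟩ with hcdef
  have hab : a ≠ b := by simp [hadef, hbdef, Fin.ext_iff]
  have hac : a ≠ c := by simp [hadef, hcdef, Fin.ext_iff]
  have hbc : b ≠ c := by simp [hbdef, hcdef, Fin.ext_iff]
  by_cases ha : a ≠ i ∧ a ≠ i'
  · exact ⟨a, ha⟩
  by_cases hb : b ≠ i ∧ b ≠ i'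
  · exact ⟨b, hb⟩
  push_neg at ha hb
  refine ⟨c, fun hc => ?_, fun hc => ?_⟩
  · have ha' : a = i' := ha (fun h => hac (h.trans hc.symm))
    have hb' : b = i' := hb (fun h => hbc (h.trans hc.symm))
    exact hab (ha'.trans hb'.symm)
  · have ha' : a = i := by
      by_contra h
      exact hac ((ha h).trans hc.symm)
    have hb' : b = i := by
      by_contra h
      exact hbc ((hb h).trans hc.symm)
    exact hab (ha'.trans hb'.symm)

lemma ex_nbr {k : ℕ} (hk : 3 ≤ k) (u : Fin k ⊕ Fin k) : ∃ a, code a u = 1 := by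
  rcases u with i | i
  · obtain ⟨j, hj, -⟩ := fin_exists_ne hk i i
    exact ⟨inr j, by simp [code, hj]⟩
  · obtain ⟨j, hj, -⟩ := fin_exists_ne hk i i
    exact ⟨inl j, by simp [code, hj]⟩

lemma code2_common {k : ℕ} (hk : 3 ≤ k) {u v : Fin k ⊕ Fin k} (h : code u v = 2) :
    ∃ a, code a u = 1 ∧ code a v = 1 := by
  rcases u with i | i <;> rcases v with j | j <;>
    simp only [code] at h <;> split_ifs at h with hij <;> try omega
  · obtain ⟨c, hc, hc'⟩ := fin_exists_ne hk i j
    exact ⟨inr c, by simp [code, hc], by simp [code, hc']⟩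
  · obtain ⟨c, hc, hc'⟩ := fin_exists_ne hk i j
    exact ⟨inl c, by simp [code, hc], by simp [code, hc']⟩

lemma code3_witness {k : ℕ} (hk : 3 ≤ k) {u v : Fin k ⊕ Fin k} (h : code u v = 3) :
    ∃ a, code a u = 1 ∧ code a v = 2 := by
  rcases u with i | i <;> rcases v with j | j <;>
    simp only [code] at h <;> split_ifs at h with hij <;> try omega
  all_goals subst hij
  · obtain ⟨c, hc, -⟩ := fin_exists_ne hk i i
    exact ⟨inr c, by simp [code, hc], by simp [code, hc]⟩
  · obtain ⟨c, hc, -⟩ := fin_exists_ne hk i i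
    exact ⟨inl c, by simp [code, hc], by simp [code, hc]⟩

lemma code1_witness {k : ℕ} (hk : 3 ≤ k) {u v : Fin k ⊕ Fin k} (h : code u v = 1) :
    ∃ a, code a u = 1 ∧ code a v = 2 := by
  rcases u with i | i <;> rcases v with j | j <;>
    simp only [code] at h <;> split_ifs at h with hij <;> try omega
  · obtain ⟨c, hc, hc'⟩ := fin_exists_ne hk i j
    exact ⟨inr c, by simp [code, hc], by simp [code, hc']⟩
  · obtain ⟨c, hc, hc'⟩ := fin_exists_ne hk i j
    exact ⟨inl c, by simp [code, hc], by simp [code, hc']⟩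

lemma code3_path {k : ℕ} (hk : 3 ≤ k) {u v : Fin k ⊕ Fin k} (h : code u v = 3) :
    ∃ a b, code a u = 1 ∧ code b a = 1 ∧ code b v = 1 := by
  rcases u with i | i <;> rcases v with j | j <;>
    simp only [code] at h <;> split_ifs at h with hij <;> try omega
  all_goals subst hij
  · obtain ⟨c, hc, -⟩ := fin_exists_ne hk i i
    obtain ⟨d, hd, hd'⟩ := fin_exists_ne hk i c
    exact ⟨inr c, inl d, by simp [code, hc], by simp [code, hd'], by simp [code, hd]⟩
  · obtain ⟨c, hc, -⟩ := fin_exists_ne hk i i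
    obtain ⟨d, hd, hd'⟩ := fin_exists_ne hk i c
    exact ⟨inl c, inr d, by simp [code, hc], by simp [code, hd'], by simp [code, hd]⟩

def D (s t : ℕ) : ℕ :=
  if s = 0 then t else if t = 0 then s else if 2 ≤ s ∧ 2 ≤ t then 1
  else if s = 1 ∧ t = 1 then 1 else 2

lemma prod_adj {n m : ℕ} (u v : (Fin n ⊕ Fin n) × (Fin m ⊕ Fin m)) :
    (modularProduct (bipMinusM n) (bipMinusM m)).Adj u v ↔
      D (code u.1 v.1) (code u.2 v.2) = 1 := by
  have hs := code_le_three u.1 v.1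
  have ht := code_le_three u.2 v.2
  have e1 : (u.1 = v.1) ↔ code u.1 v.1 = 0 := code_eq_zero_iff.symm
  have e1' : (v.1 = u.1) ↔ code u.1 v.1 = 0 := by rw [eq_comm]; exact e1
  have e2 : (u.2 = v.2) ↔ code u.2 v.2 = 0 := code_eq_zero_iff.symm
  have e2' : (v.2 = u.2) ↔ code u.2 v.2 = 0 := by rw [eq_comm]; exact e2
  have a1 : (bipMinusM n).Adj u.1 v.1 ↔ code u.1 v.1 = 1 := bip_adj _ _
  have a1' : (bipMinusM n).Adj v.1 u.1 ↔ code u.1 v.1 = 1 := by rw [adj_comm]; exact a1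
  have a2 : (bipMinusM m).Adj u.2 v.2 ↔ code u.2 v.2 = 1 := bip_adj _ _
  have a2' : (bipMinusM m).Adj v.2 u.2 ↔ code u.2 v.2 = 1 := by rw [adj_comm]; exact a2
  have hne : (u ≠ v) ↔ ¬(code u.1 v.1 = 0 ∧ code u.2 v.2 = 0) := by
    rw [Ne, Prod.ext_iff, e1, e2]
  have e1n : (u.1 ≠ v.1) ↔ ¬(code u.1 v.1 = 0) := not_congr e1
  have e2n : (u.2 ≠ v.2) ↔ ¬(code u.2 v.2 = 0) := not_congr e2
  have e1n' : (v.1 ≠ u.1) ↔ ¬(code u.1 v.1 = 0) := not_congr e1'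
  have e2n' : (v.2 ≠ u.2) ↔ ¬(code u.2 v.2 = 0) := not_congr e2'
  rw [modularProduct, SimpleGraph.fromRel_adj, hne, e1n, e2n, e1n', e2n', e1, e1', e2, e2',
    a1, a1', a2, a2']
  unfold D
  split_ifs <;> omega

lemma dist_eq_two {α : Type*} {G : SimpleGraph α} {u v w : α} (hne : u ≠ v)
    (hadj : ¬G.Adj u v) (h1 : G.Adj u w) (h2 : G.Adj w v) : G.dist u v = 2 := by
  have hle : G.dist u v ≤ 2 := by
    simpa using SimpleGraph.dist_le
      (SimpleGraph.Walk.cons h1 (SimpleGraph.Walk.cons h2 SimpleGraph.Walk.nil))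
  have hpos : 0 < G.dist u v := SimpleGraph.Reachable.pos_dist_of_ne
    ⟨SimpleGraph.Walk.cons h1 (SimpleGraph.Walk.cons h2 SimpleGraph.Walk.nil)⟩ hne
  have hone : G.dist u v ≠ 1 := fun h => hadj (SimpleGraph.dist_eq_one_iff_adj.mp h)
  omega

lemma dist_eq_three {α : Type*} {G : SimpleGraph α} {u v w1 w2 : α} (hne : u ≠ v)
    (hadj : ¬G.Adj u v) (hno : ∀ w, ¬(G.Adj u w ∧ G.Adj w v))
    (h1 : G.Adj u w1) (h2 : G.Adj w1 w2) (h3 : G.Adj w2 v) : G.dist u v = 3 := by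
  have hle : G.dist u v ≤ 3 := by
    simpa using SimpleGraph.dist_le (SimpleGraph.Walk.cons h1
      (SimpleGraph.Walk.cons h2 (SimpleGraph.Walk.cons h3 SimpleGraph.Walk.nil)))
  have hpos : 0 < G.dist u v := SimpleGraph.Reachable.pos_dist_of_ne
    ⟨SimpleGraph.Walk.cons h1
      (SimpleGraph.Walk.cons h2 (SimpleGraph.Walk.cons h3 SimpleGraph.Walk.nil))⟩ hne
  have hone : G.dist u v ≠ 1 := fun h => hadj (SimpleGraph.dist_eq_one_iff_adj.mp h)
  have htwo : G.dist u v ≠ 2 := by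
    intro h
    obtain ⟨p, hp⟩ := SimpleGraph.exists_walk_of_dist_ne_zero (G := G) (u := u) (v := v) (by omega)
    rw [h] at hp
    have h01 : G.Adj (p.getVert 0) (p.getVert 1) := p.adj_getVert_succ (by omega)
    have h12 : G.Adj (p.getVert 1) (p.getVert 2) := p.adj_getVert_succ (by omega)
    have hv : p.getVert 2 = v := by rw [← hp]; exact p.getVert_length
    rw [p.getVert_zero] at h01
    rw [hv] at h12
    exact hno (p.getVert 1) ⟨h01, h12⟩
  omega

lemma Dimp : ∀ s' t' : ℕ, t' ≤ 3 → D s' t' = 1 → D s' (3 - t') = 1 → False := by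
  intro s' t' h3 h1 h2
  unfold D at h1 h2
  split_ifs at h1 h2 <;> omega

lemma D_comm (s t : ℕ) : D s t = D t s := by
  unfold D; split_ifs <;> omega

theorem prod_dist {n m : ℕ} (hn : 3 ≤ n) (hm : 3 ≤ m)
    (u v : (Fin n ⊕ Fin n) × (Fin m ⊕ Fin m)) :
    (modularProduct (bipMinusM n) (bipMinusM m)).dist u v = D (code u.1 v.1) (code u.2 v.2) := by
  obtain ⟨g, h⟩ := u
  obtain ⟨g', h'⟩ := v
  show (modularProduct (bipMinusM n) (bipMinusM m)).dist (g, h) (g', h') = D (code g g') (code h h')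
  obtain ⟨s, hs⟩ : ∃ s, code g g' = s := ⟨_, rfl⟩
  obtain ⟨t, ht⟩ : ∃ t, code h h' = t := ⟨_, rfl⟩
  rw [hs, ht]
  have hs3 : s ≤ 3 := hs ▸ code_le_three g g'
  have ht3 : t ≤ 3 := ht ▸ code_le_three h h'
  -- generic tools
  have hADJ : ∀ (p q : (Fin n ⊕ Fin n) × (Fin m ⊕ Fin m)),
      (modularProduct (bipMinusM n) (bipMinusM m)).Adj p q ↔
        D (code p.1 q.1) (code p.2 q.2) = 1 := prod_adj
  have hnuv : ¬(s = 0 ∧ t = 0) → ((g, h) : _ × _) ≠ (g', h') := by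
    intro hst he
    rw [Prod.mk.injEq] at he
    obtain ⟨e1, e2⟩ := he
    subst e1; subst e2
    rw [code_self] at hs ht
    exact hst ⟨hs.symm, ht.symm⟩
  interval_cases s <;> interval_cases t
  -- (0,0)
  · have h1 : g = g' := code_eq_zero_iff.mp hs
    have h2 : h = h' := code_eq_zero_iff.mp ht
    subst h1; subst h2
    simp [D, SimpleGraph.dist_self]
  -- (0,1) adjacent
  · rw [show D 0 1 = 1 by simp [D], SimpleGraph.dist_eq_one_iff_adj]
    exact (hADJ _ _).mpr (by simp [hs, ht, D])
  -- (0,2) dist 2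
  · have hg : g' = g := (code_eq_zero_iff.mp hs).symm
    obtain ⟨a, ha⟩ := ex_nbr hn g
    obtain ⟨b, hb1, hb2⟩ := code2_common hm ht
    rw [show D 0 2 = 2 by simp [D]]
    refine dist_eq_two (hnuv (by omega)) ?_ (w := (a, b)) ?_ ?_
    · intro hadj
      have := (hADJ _ _).mp hadj
      simp [hs, ht, D] at this
    · exact (hADJ _ _).mpr (by simp [code_comm g a, code_comm h b, ha, hb1, D])
    · exact (hADJ _ _).mpr (by simp [hg, ha, hb2, D])
  -- (0,3) dist 3
  · have hg : g' = g := (code_eq_zero_iff.mp hs).symm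
    have hh' : h' = Sum.swap h := code_eq_three_iff.mp ht
    obtain ⟨b1, b2, hb1, hb2, hb3⟩ := code3_path hm ht
    rw [show D 0 3 = 3 by simp [D]]
    refine dist_eq_three (hnuv (by omega)) ?_ ?_ (w1 := (g, b1)) (w2 := (g, b2)) ?_ ?_ ?_
    · intro hadj
      have := (hADJ _ _).mp hadj
      simp [hs, ht, D] at this
    · rintro ⟨a, b⟩ ⟨hw1, hw2⟩
      have c1 : D (code a g) (code b h) = 1 := by
        simpa [code_comm g a, code_comm h b] using (hADJ _ _).mp hw1
      have c2 : D (code a g) (3 - code b h) = 1 := by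
        have := (hADJ _ _).mp hw2
        simp only [hg, hh'] at this
        simpa [code_swap] using this
      exact Dimp (code a g) (code b h) (code_le_three _ _) c1 c2
    · exact (hADJ _ _).mpr (by simp [code_self, code_comm h b1, hb1, D])
    · exact (hADJ _ _).mpr (by simp [code_self, code_comm b1 b2, hb2, D])
    · exact (hADJ _ _).mpr (by simp [hg, code_self, hb3, D])
  -- (1,0) adjacent
  · rw [show D 1 0 = 1 by simp [D], SimpleGraph.dist_eq_one_iff_adj]
    exact (hADJ _ _).mpr (by simp [hs, ht, D])
  -- (1,1) adjacent
  · rw [show D 1 1 = 1 by simp [D], SimpleGraph.dist_eq_one_iff_adj]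
    exact (hADJ _ _).mpr (by simp [hs, ht, D])
  -- (1,2) dist 2
  · obtain ⟨b, hb1, hb2⟩ := code2_common hm ht
    rw [show D 1 2 = 2 by simp [D]]
    refine dist_eq_two (hnuv (by omega)) ?_ (w := (g, b)) ?_ ?_
    · intro hadj
      have := (hADJ _ _).mp hadj
      simp [hs, ht, D] at this
    · exact (hADJ _ _).mpr (by simp [code_self, code_comm h b, hb1, D])
    · exact (hADJ _ _).mpr (by simp [hs, hb2, D])
  -- (1,3) dist 2
  · obtain ⟨a, ha1, ha2⟩ := code1_witness hn hs
    obtain ⟨b, hb1, hb2⟩ := code3_witness hm ht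
    rw [show D 1 3 = 2 by simp [D]]
    refine dist_eq_two (hnuv (by omega)) ?_ (w := (a, b)) ?_ ?_
    · intro hadj
      have := (hADJ _ _).mp hadj
      simp [hs, ht, D] at this
    · exact (hADJ _ _).mpr (by simp [code_comm g a, code_comm h b, ha1, hb1, D])
    · exact (hADJ _ _).mpr (by simp [ha2, hb2, D])
  -- (2,0) dist 2
  · have hh : h' = h := (code_eq_zero_iff.mp ht).symm
    obtain ⟨a, ha1, ha2⟩ := code2_common hn hs
    obtain ⟨b, hb⟩ := ex_nbr hm h
    rw [show D 2 0 = 2 by simp [D]]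
    refine dist_eq_two (hnuv (by omega)) ?_ (w := (a, b)) ?_ ?_
    · intro hadj
      have := (hADJ _ _).mp hadj
      simp [hs, ht, D] at this
    · exact (hADJ _ _).mpr (by simp [code_comm g a, code_comm h b, ha1, hb, D])
    · exact (hADJ _ _).mpr (by simp [hh, ha2, hb, D])
  -- (2,1) dist 2
  · obtain ⟨a, ha1, ha2⟩ := code2_common hn hs
    rw [show D 2 1 = 2 by simp [D]]
    refine dist_eq_two (hnuv (by omega)) ?_ (w := (a, h)) ?_ ?_
    · intro hadj
      have := (hADJ _ _).mp hadj
      simp [hs, ht, D] at this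
    · exact (hADJ _ _).mpr (by simp [code_comm g a, code_self, ha1, D])
    · exact (hADJ _ _).mpr (by simp [ha2, ht, D])
  -- (2,2) adjacent
  · rw [show D 2 2 = 1 by simp [D], SimpleGraph.dist_eq_one_iff_adj]
    exact (hADJ _ _).mpr (by simp [hs, ht, D])
  -- (2,3) adjacent
  · rw [show D 2 3 = 1 by simp [D], SimpleGraph.dist_eq_one_iff_adj]
    exact (hADJ _ _).mpr (by simp [hs, ht, D])
  -- (3,0) dist 3
  · have hh : h' = h := (code_eq_zero_iff.mp ht).symm
    have hg' : g' = Sum.swap g := code_eq_three_iff.mp hs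
    obtain ⟨a1, a2, ha1, ha2, ha3⟩ := code3_path hn hs
    rw [show D 3 0 = 3 by simp [D]]
    refine dist_eq_three (hnuv (by omega)) ?_ ?_ (w1 := (a1, h)) (w2 := (a2, h)) ?_ ?_ ?_
    · intro hadj
      have := (hADJ _ _).mp hadj
      simp [hs, ht, D] at this
    · rintro ⟨a, b⟩ ⟨hw1, hw2⟩
      have c1 : D (code b h) (code a g) = 1 := by
        rw [D_comm]
        simpa [code_comm g a, code_comm h b] using (hADJ _ _).mp hw1
      have c2 : D (code b h) (3 - code a g) = 1 := by
        rw [D_comm]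
        have := (hADJ _ _).mp hw2
        simp only [hg', hh] at this
        simpa [code_swap] using this
      exact Dimp (code b h) (code a g) (code_le_three _ _) c1 c2
    · exact (hADJ _ _).mpr (by simp [code_self, code_comm g a1, ha1, D])
    · exact (hADJ _ _).mpr (by simp [code_self, code_comm a1 a2, ha2, D])
    · exact (hADJ _ _).mpr (by simp [hh, code_self, ha3, D])
  -- (3,1) dist 2
  · obtain ⟨a, ha1, ha2⟩ := code3_witness hn hs
    obtain ⟨b, hb1, hb2⟩ := code1_witness hm ht
    rw [show D 3 1 = 2 by simp [D]]
    refine dist_eq_two (hnuv (by omega)) ?_ (w := (a, b)) ?_ ?_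
    · intro hadj
      have := (hADJ _ _).mp hadj
      simp [hs, ht, D] at this
    · exact (hADJ _ _).mpr (by simp [code_comm g a, code_comm h b, ha1, hb1, D])
    · exact (hADJ _ _).mpr (by simp [ha2, hb2, D])
  -- (3,2) adjacent
  · rw [show D 3 2 = 1 by simp [D], SimpleGraph.dist_eq_one_iff_adj]
    exact (hADJ _ _).mpr (by simp [hs, ht, D])
  -- (3,3) adjacent
  · rw [show D 3 3 = 1 by simp [D], SimpleGraph.dist_eq_one_iff_adj]
    exact (hADJ _ _).mpr (by simp [hs, ht, D])

lemma Dforce1 (s t : ℕ) (hs : s ≤ 3) (ht : t ≤ 3) :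
    D s t = 3 + D s (3 - t) → s = 0 ∧ t = 3 := by unfold D; split_ifs <;> omega

lemma Dforce1' (s t : ℕ) (hs : s ≤ 3) (ht : t ≤ 3) :
    D s (3 - t) = 3 + D s t → s = 0 ∧ t = 0 := by unfold D; split_ifs <;> omega

lemma Dforce2 (s t : ℕ) (hs : s ≤ 3) (ht : t ≤ 3) :
    D s t = 3 + D (3 - s) t → s = 3 ∧ t = 0 := by unfold D; split_ifs <;> omega

lemma Dforce2' (s t : ℕ) (hs : s ≤ 3) (ht : t ≤ 3) :
    D (3 - s) t = 3 + D s t → s = 0 ∧ t = 0 := by unfold D; split_ifs <;> omega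

lemma Dforce3 (s t : ℕ) (hs : s ≤ 3) (ht : t ≤ 3) :
    D s t = 1 + D (3 - s) (3 - t) → s = 3 ∧ t = 3 := by unfold D; split_ifs <;> omega

lemma Dforce3' (s t : ℕ) (hs : s ≤ 3) (ht : t ≤ 3) :
    D (3 - s) (3 - t) = 1 + D s t → s = 0 ∧ t = 0 := by unfold D; split_ifs <;> omega

lemma forced {n m : ℕ} (hn : 3 ≤ n) (hm : 3 ≤ m)
    (g : Fin n ⊕ Fin n) (h : Fin m ⊕ Fin m)
    (v w : (Fin n ⊕ Fin n) × (Fin m ⊕ Fin m))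
    (hv : v = (g, Sum.swap h) ∨ v = (Sum.swap g, h) ∨ v = (Sum.swap g, Sum.swap h))
    (heq : (modularProduct (bipMinusM n) (bipMinusM m)).dist (g, h) w =
        (modularProduct (bipMinusM n) (bipMinusM m)).dist (g, h) v +
        (modularProduct (bipMinusM n) (bipMinusM m)).dist v w ∨
      (modularProduct (bipMinusM n) (bipMinusM m)).dist v w =
        (modularProduct (bipMinusM n) (bipMinusM m)).dist v (g, h) +
        (modularProduct (bipMinusM n) (bipMinusM m)).dist (g, h) w) :
    w = (g, h) ∨ w = v := by
  obtain ⟨a, b⟩ := w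
  have hs3 := code_le_three g a
  have ht3 := code_le_three h b
  simp only [prod_dist hn hm] at heq
  rcases hv with rfl | rfl | rfl
  · simp only [code_self, code_swap, code_swap_left] at heq
    norm_num [show D 0 (3 - 0) = 3 by simp [D]] at heq
    rcases heq with he | he
    · obtain ⟨h1, h2⟩ := Dforce1 _ _ hs3 ht3 he
      right
      rw [Prod.mk.injEq]
      exact ⟨(code_eq_zero_iff.mp h1).symm, (code_eq_three_iff.mp h2).symm ▸ rfl⟩
    · obtain ⟨h1, h2⟩ := Dforce1' _ _ hs3 ht3 he
      left
      rw [Prod.mk.injEq]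
      exact ⟨(code_eq_zero_iff.mp h1).symm, (code_eq_zero_iff.mp h2).symm⟩
  · simp only [code_self, code_swap, code_swap_left] at heq
    norm_num [show D (3 - 0) 0 = 3 by simp [D]] at heq
    rcases heq with he | he
    · obtain ⟨h1, h2⟩ := Dforce2 _ _ hs3 ht3 he
      right
      rw [Prod.mk.injEq]
      exact ⟨(code_eq_three_iff.mp h1).symm ▸ rfl, (code_eq_zero_iff.mp h2).symm⟩
    · obtain ⟨h1, h2⟩ := Dforce2' _ _ hs3 ht3 he
      left
      rw [Prod.mk.injEq]
      exact ⟨(code_eq_zero_iff.mp h1).symm, (code_eq_zero_iff.mp h2).symm⟩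
  · simp only [code_self, code_swap, code_swap_left] at heq
    norm_num [show D (3 - 0) (3 - 0) = 1 by simp [D]] at heq
    rcases heq with he | he
    · obtain ⟨h1, h2⟩ := Dforce3 _ _ hs3 ht3 he
      right
      rw [Prod.mk.injEq]
      exact ⟨(code_eq_three_iff.mp h1).symm ▸ rfl, (code_eq_three_iff.mp h2).symm ▸ rfl⟩
    · obtain ⟨h1, h2⟩ := Dforce3' _ _ hs3 ht3 he
      left
      rw [Prod.mk.injEq]
      exact ⟨(code_eq_zero_iff.mp h1).symm, (code_eq_zero_iff.mp h2).symm⟩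

def idx {k : ℕ} : (Fin k ⊕ Fin k) → Fin k := Sum.elim id id

lemma idx_eq_iff {k : ℕ} {a g : Fin k ⊕ Fin k} :
    idx a = idx g ↔ (a = g ∨ a = Sum.swap g) := by
  rcases a with i | i <;> rcases g with j | j <;> simp [idx, Sum.swap]

def pidx {n m : ℕ} (p : (Fin n ⊕ Fin n) × (Fin m ⊕ Fin m)) : Fin n × Fin m :=
  (idx p.1, idx p.2)

lemma lower {n m : ℕ} (hn : 3 ≤ n) (hm : 3 ≤ m)
    (S : Set ((Fin n ⊕ Fin n) × (Fin m ⊕ Fin m)))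
    (hS : IsStrongResolvingSet (modularProduct (bipMinusM n) (bipMinusM m)) S) :
    3 * (n * m) ≤ S.ncard := by
  classical
  have key : ∀ u v : (Fin n ⊕ Fin n) × (Fin m ⊕ Fin m),
      u ≠ v → pidx u = pidx v → u ∈ S ∨ v ∈ S := by
    rintro ⟨g, h⟩ ⟨g', h'⟩ hne hpidx
    rw [Prod.mk.injEq] at hpidx
    have h1 : g' = g ∨ g' = Sum.swap g := idx_eq_iff.mp hpidx.1.symm
    have h2 : h' = h ∨ h' = Sum.swap h := idx_eq_iff.mp hpidx.2.symm
    have hv : ((g', h') : _ × _) = (g, Sum.swap h) ∨ (g', h') = (Sum.swap g, h) ∨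
        (g', h') = (Sum.swap g, Sum.swap h) := by
      rcases h1 with rfl | rfl <;> rcases h2 with rfl | rfl
      · exact absurd rfl hne
      · exact Or.inl rfl
      · exact Or.inr (Or.inl rfl)
      · exact Or.inr (Or.inr rfl)
    obtain ⟨w, hwS, hw⟩ := hS (g, h) (g', h') hne
    rcases forced hn hm g h (g', h') w hv hw with rfl | rfl
    · exact Or.inl hwS
    · exact Or.inr hwS
  have hfin : S.Finite := Set.toFinite S
  rw [Set.ncard_eq_toFinset_card S hfin]
  rw [Finset.card_eq_sum_card_fiberwise
    (f := pidx) (t := Finset.univ) (fun x _ => Finset.mem_univ _)]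
  have hge : ∀ p : Fin n × Fin m,
      3 ≤ (hfin.toFinset.filter (fun x => pidx x = p)).card := by
    rintro ⟨i, j⟩
    set e1 : (Fin n ⊕ Fin n) × (Fin m ⊕ Fin m) := (Sum.inl i, Sum.inl j) with he1
    set e2 : (Fin n ⊕ Fin n) × (Fin m ⊕ Fin m) := (Sum.inl i, Sum.inr j) with he2
    set e3 : (Fin n ⊕ Fin n) × (Fin m ⊕ Fin m) := (Sum.inr i, Sum.inl j) with he3
    set e4 : (Fin n ⊕ Fin n) × (Fin m ⊕ Fin m) := (Sum.inr i, Sum.inr j) with he4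
    have hi1 : pidx e1 = (i, j) := by simp [pidx, idx, he1]
    have hi2 : pidx e2 = (i, j) := by simp [pidx, idx, he2]
    have hi3 : pidx e3 = (i, j) := by simp [pidx, idx, he3]
    have hi4 : pidx e4 = (i, j) := by simp [pidx, idx, he4]
    have hmem : ∀ x, x ∈ S → pidx x = (i, j) →
        x ∈ hfin.toFinset.filter (fun x => pidx x = (i, j)) := by
      intro x hx hpx
      exact Finset.mem_filter.mpr ⟨hfin.mem_toFinset.mpr hx, hpx⟩
    have hcard3 : ∀ x y z : (Fin n ⊕ Fin n) × (Fin m ⊕ Fin m), x ≠ y → x ≠ z → y ≠ z →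
        x ∈ S → y ∈ S → z ∈ S → pidx x = (i, j) → pidx y = (i, j) → pidx z = (i, j) →
        3 ≤ (hfin.toFinset.filter (fun w => pidx w = (i, j))).card := by
      intro x y z hxy hxz hyz hx hy hz hpx hpy hpz
      have hsub : ({x, y, z} : Finset _) ⊆ hfin.toFinset.filter (fun w => pidx w = (i, j)) := by
        intro w hw
        simp only [Finset.mem_insert, Finset.mem_singleton] at hw
        rcases hw with rfl | rfl | rfl
        · exact hmem _ hx hpx
        · exact hmem _ hy hpy
        · exact hmem _ hz hpz
      have : ({x, y, z} : Finset _).card = 3 := by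
        rw [Finset.card_insert_of_notMem (by simp [hxy, hxz]),
          Finset.card_insert_of_notMem (by simp [hyz]), Finset.card_singleton]
      rw [← this]
      exact Finset.card_le_card hsub
    have n12 : e1 ≠ e2 := by simp [he1, he2]
    have n13 : e1 ≠ e3 := by simp [he1, he3]
    have n14 : e1 ≠ e4 := by simp [he1, he4]
    have n23 : e2 ≠ e3 := by simp [he2, he3]
    have n24 : e2 ≠ e4 := by simp [he2, he4]
    have n34 : e3 ≠ e4 := by simp [he3, he4]
    by_cases m1 : e1 ∈ S
    · by_cases m2 : e2 ∈ S
      · by_cases m3 : e3 ∈ S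
        · exact hcard3 e1 e2 e3 n12 n13 n23 m1 m2 m3 hi1 hi2 hi3
        · have m4 : e4 ∈ S :=
            (key e3 e4 n34 (hi3.trans hi4.symm)).resolve_left m3
          exact hcard3 e1 e2 e4 n12 n14 n24 m1 m2 m4 hi1 hi2 hi4
      · have m3 : e3 ∈ S := (key e2 e3 n23 (hi2.trans hi3.symm)).resolve_left m2
        have m4 : e4 ∈ S := (key e2 e4 n24 (hi2.trans hi4.symm)).resolve_left m2
        exact hcard3 e1 e3 e4 n13 n14 n34 m1 m3 m4 hi1 hi3 hi4
    · have m2 : e2 ∈ S := (key e1 e2 n12 (hi1.trans hi2.symm)).resolve_left m1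
      have m3 : e3 ∈ S := (key e1 e3 n13 (hi1.trans hi3.symm)).resolve_left m1
      have m4 : e4 ∈ S := (key e1 e4 n14 (hi1.trans hi4.symm)).resolve_left m1
      exact hcard3 e2 e3 e4 n23 n24 n34 m2 m3 m4 hi2 hi3 hi4
  have hsum := Finset.card_nsmul_le_sum (Finset.univ : Finset (Fin n × Fin m))
    (fun p => (hfin.toFinset.filter (fun x => pidx x = p)).card) 3 (fun p _ => hge p)
  have hcardu : (Finset.univ : Finset (Fin n × Fin m)).card = n * m := by simp
  rw [hcardu, smul_eq_mul, mul_comm] at hsum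
  exact hsum

lemma upper {n m : ℕ} (hn : 3 ≤ n) (hm : 3 ≤ m) :
    ∃ S : Set ((Fin n ⊕ Fin n) × (Fin m ⊕ Fin m)), S.ncard = 3 * (n * m) ∧
      IsStrongResolvingSet (modularProduct (bipMinusM n) (bipMinusM m)) S := by
  classical
  set T : Set ((Fin n ⊕ Fin n) × (Fin m ⊕ Fin m)) :=
    {p | (∃ i, p.1 = Sum.inl i) ∧ (∃ j, p.2 = Sum.inl j)} with hTdef
  refine ⟨Tᶜ, ?_, ?_⟩
  · have hT : T = (fun q : Fin n × Fin m =>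
        ((Sum.inl q.1 : Fin n ⊕ Fin n), (Sum.inl q.2 : Fin m ⊕ Fin m))) '' Set.univ := by
      ext ⟨x, y⟩
      simp only [hTdef, Set.mem_setOf_eq, Set.mem_image, Set.mem_univ, true_and]
      constructor
      · rintro ⟨⟨i, rfl⟩, ⟨j, rfl⟩⟩
        exact ⟨(i, j), rfl⟩
      · rintro ⟨⟨i, j⟩, hq⟩
        rw [Prod.mk.injEq] at hq
        exact ⟨⟨i, hq.1.symm⟩, ⟨j, hq.2.symm⟩⟩
    have hinj : Function.Injective (fun q : Fin n × Fin m =>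
        ((Sum.inl q.1 : Fin n ⊕ Fin n), (Sum.inl q.2 : Fin m ⊕ Fin m))) := by
      intro p q hpq
      rw [Prod.mk.injEq] at hpq
      exact Prod.ext_iff.mpr ⟨Sum.inl_injective hpq.1, Sum.inl_injective hpq.2⟩
    have hTcard : T.ncard = n * m := by
      rw [hT, Set.ncard_image_of_injective _ hinj, Set.ncard_univ]
      simp [Nat.card_eq_fintype_card]
    have h1 := Set.ncard_add_ncard_compl Tᶜ (Set.toFinite _) (Set.toFinite _)
    rw [compl_compl, hTcard] at h1
    have h2 : Nat.card ((Fin n ⊕ Fin n) × (Fin m ⊕ Fin m)) = 4 * (n * m) := by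
      simp [Nat.card_eq_fintype_card]
      ring
    rw [h2] at h1
    omega
  · intro u v hne
    by_cases hv : v ∈ Tᶜ
    · exact ⟨v, hv, Or.inl (by simp [SimpleGraph.dist_self])⟩
    by_cases hu : u ∈ Tᶜ
    · exact ⟨u, hu, Or.inr (by simp [SimpleGraph.dist_self])⟩
    rw [Set.notMem_compl_iff] at hu hv
    obtain ⟨x, y⟩ := u
    obtain ⟨x', y'⟩ := v
    obtain ⟨⟨i, hi⟩, ⟨j, hj⟩⟩ := hu
    obtain ⟨⟨i', hi'⟩, ⟨j', hj'⟩⟩ := hv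
    simp only at hi hj hi' hj'
    subst hi; subst hj; subst hi'; subst hj'
    by_cases hii : i = i'
    · subst hii
      have hjj : j ≠ j' := by
        intro hj; exact hne (by rw [hj])
      refine ⟨(Sum.inl i, Sum.inr j), ?_, Or.inl ?_⟩
      · simp [hTdef]
      · rw [prod_dist hn hm, prod_dist hn hm, prod_dist hn hm]
        simp [code, hjj, Ne.symm hjj, D]
    · by_cases hjj : j = j'
      · subst hjj
        refine ⟨(Sum.inr i, Sum.inl j), ?_, Or.inl ?_⟩
        · simp [hTdef]
        · rw [prod_dist hn hm, prod_dist hn hm, prod_dist hn hm]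
          simp [code, hii, Ne.symm hii, D]
      · refine ⟨(Sum.inl i, Sum.inr j), ?_, Or.inl ?_⟩
        · simp [hTdef]
        · rw [prod_dist hn hm, prod_dist hn hm, prod_dist hn hm]
          simp [code, hii, Ne.symm hii, hjj, Ne.symm hjj, D]

end SdimAux

/-- the strong metric dimension of the modular product of two complete
bipartite graphs minus perfect matchings. -/
theorem sdim_bipMinusM_modularProduct (n m : ℕ) (hn : 3 ≤ n) (hm : 3 ≤ m) :
    sdim (modularProduct (bipMinusM n) (bipMinusM m)) = 3 * n * m := by
  obtain ⟨S, hScard, hSres⟩ := SdimAux.upper hn hm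
  have hmem : 3 * (n * m) ∈
      {k | ∃ S : Set ((Fin n ⊕ Fin n) × (Fin m ⊕ Fin m)), S.ncard = k ∧
        IsStrongResolvingSet (modularProduct (bipMinusM n) (bipMinusM m)) S} :=
    ⟨S, hScard, hSres⟩
  rw [mul_assoc]
  unfold sdim
  apply le_antisymm
  · exact Nat.sInf_le hmem
  · have hmem' := Nat.sInf_mem (⟨_, hmem⟩ : Set.Nonempty _)
    obtain ⟨S', hc, hsrs⟩ := hmem'
    rw [← hc]
    exact SdimAux.lower hn hm S' hsrs
end

section
/- For every integer r ≥ 7, the strong metric dimension of the modular product of the path P_5 with the cycle C_r satisfies dim_s(P_5 ⋄ C_r) = 3r − 2. -/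
open SimpleGraph

/-!
In `G ⋄ H` two distinct vertices `(g, h)`, `(g', h')` are adjacent exactly when
`g' ∈ N[g] ↔ h' ∈ N[h]`. For `G = P₅` and `H = C_r` with `r ≥ 7` (so that any two vertices of
`C_r` have a common vertex outside both closed neighbourhoods) this puts every two vertices at
distance at most 2, except the pairs `(i, h)`, `(j, h)` with `{i, j}` a `γ`-pair of `P₅`
(`{0, 3}` or `{1, 4}`): these have no common neighbour, so they are at distance 3, and every
other vertex is adjacent to one of them, so every vertex lies on a geodesic between them.

Lower bound: a strong resolving set contains one vertex of every pair of mutually maximally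
distant vertices. These include the `γ`-pairs above (diameter 3) and the pairs `(2, a)`, `(2, b)`
with `a`, `b` non-adjacent (the vertices of row 2 have eccentricity 2). So the set misses at most
one vertex of each `γ`-pair, and in row 2 at most a clique of `C_r`, i.e. two vertices.

Upper bound: rows 0, 1 and row 2 without an edge `(2, h₀)`, `(2, h₁)` form a strong resolving set.
A vertex of rows 3, 4 is resolved by its `γ`-partner in rows 0, 1, and the remaining pair by
`(2, m)`, where `h₀ h₁ m` is an induced path.
-/

section ClosedNbr

variable {α : Type*} {G : SimpleGraph α} {u v g g' : α}

theorem mem_closedNbr : v ∈ closedNbr G u ↔ v = u ∨ G.Adj u v := Iff.rfl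

theorem self_mem_closedNbr (G : SimpleGraph α) (u : α) : u ∈ closedNbr G u := Or.inl rfl

theorem mem_closedNbr_comm : v ∈ closedNbr G u ↔ u ∈ closedNbr G v := by
  simp only [mem_closedNbr, eq_comm, G.adj_comm]

theorem gammaPair_iff : gammaPair G g g' ↔ ∀ x, x ∉ closedNbr G g ↔ x ∈ closedNbr G g' := by
  simp only [gammaPair, Set.eq_empty_iff_forall_notMem, Set.eq_univ_iff_forall,
    Set.mem_inter_iff, Set.mem_union, ← forall_and]
  exact forall_congr' fun x => by grind

theorem gammaPair.symm (h : gammaPair G g g') : gammaPair G g' g :=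
  gammaPair_iff.2 fun x => by grind [gammaPair_iff.1 h x]

theorem gammaPair.notMem_closedNbr (h : gammaPair G g g') : g' ∉ closedNbr G g :=
  (gammaPair_iff.1 h g').2 (self_mem_closedNbr G g')

theorem gammaPair.ne (h : gammaPair G g g') : g ≠ g' := by
  rintro rfl
  exact h.notMem_closedNbr (self_mem_closedNbr G g)

end ClosedNbr

section ModularProduct

variable {α β : Type*} {G : SimpleGraph α} {H : SimpleGraph β}

theorem modularProduct_adj {x y : α × β} :
    (modularProduct G H).Adj x y ↔
      x ≠ y ∧ (y.1 ∈ closedNbr G x.1 ↔ y.2 ∈ closedNbr H x.2) := by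
  obtain ⟨a, b⟩ := x
  obtain ⟨c, d⟩ := y
  simp only [modularProduct, SimpleGraph.fromRel_adj, mem_closedNbr, ne_eq, Prod.mk.injEq]
  by_cases hac : a = c <;> by_cases hbd : b = d <;> by_cases hG : G.Adj a c <;>
    by_cases hH : H.Adj b d <;> simp_all [eq_comm, G.adj_comm, H.adj_comm]

variable {g g' : α}

theorem gammaPair.not_adj_modularProduct (hg : gammaPair G g g') (h : β) :
    ¬(modularProduct G H).Adj (g, h) (g', h) := fun hadj =>
  hg.notMem_closedNbr ((modularProduct_adj.1 hadj).2.2 (self_mem_closedNbr H h))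

theorem gammaPair.commonNeighbors_modularProduct (hg : gammaPair G g g') (h : β) :
    (modularProduct G H).commonNeighbors (g, h) (g', h) = ∅ := by
  refine Set.eq_empty_iff_forall_notMem.2 fun z ⟨hz, hz'⟩ => ?_
  have h₁ := (modularProduct_adj.1 hz).2
  have h₂ := (modularProduct_adj.1 hz').2
  rw [← gammaPair_iff.1 hg] at h₂
  grind

theorem gammaPair.three_le_dist_modularProduct (hg : gammaPair G g g') (h : β)
    (hr : (modularProduct G H).Reachable (g, h) (g', h)) :
    3 ≤ (modularProduct G H).dist (g, h) (g', h) := by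
  have h₂ := (two_lt_edist_iff (G := modularProduct G H)).2 ⟨fun e => hg.ne (congrArg Prod.fst e),
    hg.not_adj_modularProduct h, hg.commonNeighbors_modularProduct h⟩
  rw [← hr.coe_dist_eq_edist] at h₂
  exact_mod_cast h₂

theorem gammaPair.adj_or_adj_modularProduct (hg : gammaPair G g g') {h : β} {v : α × β}
    (hv : v ≠ (g, h)) (hv' : v ≠ (g', h)) :
    (modularProduct G H).Adj (g, h) v ∨ (modularProduct G H).Adj v (g', h) := by
  simp only [modularProduct_adj, ne_eq]
  rw [mem_closedNbr_comm (u := v.1), mem_closedNbr_comm (u := v.2), ← gammaPair_iff.1 hg]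
  grind

theorem modularProduct_exists_walk_length_le_two
    (hG : ∀ g g' : α, g' ∈ closedNbr G g → ∃ k, k ∉ closedNbr G g ∧ k ∉ closedNbr G g')
    (hfar : ∀ a b : β, ∃ m, m ∉ closedNbr H a ∧ m ∉ closedNbr H b)
    (hext : ∀ a b : β, H.Adj a b → ∃ m, H.Adj b m ∧ m ∉ closedNbr H a)
    {x y : α × β} (hxy : ¬(gammaPair G x.1 y.1 ∧ x.2 = y.2)) :
    ∃ p : (modularProduct G H).Walk x y, p.length ≤ 2 := by
  obtain ⟨g, h⟩ := x
  obtain ⟨g', h'⟩ := y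
  have two_steps : ∀ z, (modularProduct G H).Adj (g, h) z → (modularProduct G H).Adj z (g', h') →
      ∃ p : (modularProduct G H).Walk (g, h) (g', h'), p.length ≤ 2 :=
    fun z h₁ h₂ => ⟨.cons h₁ (.cons h₂ .nil), le_rfl⟩
  have ne_of_notMem : ∀ {k g₀ : α} {m h₀ : β}, k ∉ closedNbr G g₀ → (k, m) ≠ (g₀, h₀) :=
    fun hk e => hk ((Prod.mk.inj e).1 ▸ self_mem_closedNbr G _)
  by_cases hk : ∃ k, k ∉ closedNbr G g ∧ k ∉ closedNbr G g'
  · obtain ⟨k, hkg, hkg'⟩ := hk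
    obtain ⟨m, hmh, hmh'⟩ := hfar h h'
    refine two_steps (k, m) (modularProduct_adj.2 ⟨(ne_of_notMem hkg).symm, iff_of_false hkg hmh⟩)
      (modularProduct_adj.2 ⟨ne_of_notMem hkg', ?_⟩)
    simp only [mem_closedNbr_comm (u := k), mem_closedNbr_comm (u := m)]
    exact iff_of_false hkg' hmh'
  have hgg' : g' ∉ closedNbr G g := fun hg => hk (hG g g' hg)
  by_cases hhh' : h' ∈ closedNbr H h
  swap
  · exact ⟨(modularProduct_adj.2 ⟨(ne_of_notMem hgg').symm, iff_of_false hgg' hhh'⟩).toWalk,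
      by simp⟩
  by_cases hmid : ∃ k, k ∈ closedNbr G g ∧ k ∈ closedNbr G g'
  · obtain ⟨k, hkg, hkg'⟩ := hmid
    refine two_steps (k, h) (modularProduct_adj.2 ⟨?_, iff_of_true hkg (self_mem_closedNbr H h)⟩)
      (modularProduct_adj.2 ⟨?_, iff_of_true (mem_closedNbr_comm.1 hkg') hhh'⟩)
    · rintro ⟨⟩
      exact hgg' (mem_closedNbr_comm.1 hkg')
    · rintro ⟨⟩
      exact hgg' hkg
  have hgamma : gammaPair G g g' := gammaPair_iff.2 fun k => by grind
  have hhh : h ≠ h' := fun e => hxy ⟨hgamma, e⟩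
  obtain ⟨m, hh'm, hmh⟩ := hext h h' ((mem_closedNbr.1 hhh').resolve_left hhh.symm)
  refine two_steps (g', m) (modularProduct_adj.2 ⟨?_, iff_of_false hgg' hmh⟩)
    (modularProduct_adj.2 ⟨?_, iff_of_true (self_mem_closedNbr G g') (Or.inr hh'm.symm)⟩)
  · rintro ⟨⟩
    exact hgamma.ne rfl
  · rintro ⟨⟩
    exact hh'm.ne rfl

end ModularProduct

section PathFive

theorem mem_closedNbr_pathGraph {n : ℕ} {i j : Fin n} :
    j ∈ closedNbr (pathGraph n) i ↔ (i : ℕ) ≤ j + 1 ∧ (j : ℕ) ≤ i + 1 := by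
  rw [mem_closedNbr, pathGraph_adj, Fin.ext_iff]
  omega

theorem gammaPair_pathGraph_five {i j : Fin 5} :
    gammaPair (pathGraph 5) i j ↔ (i : ℕ) + 3 = j ∨ (j : ℕ) + 3 = i := by
  rw [gammaPair_iff]
  simp only [mem_closedNbr_pathGraph]
  revert i j
  decide

theorem gammaPair_pathGraph_five_unique {i j k : Fin 5} (hij : gammaPair (pathGraph 5) i j)
    (hkj : gammaPair (pathGraph 5) k j) : k = i := by
  rw [gammaPair_pathGraph_five] at hij hkj
  omega

theorem not_gammaPair_pathGraph_five_two (i : Fin 5) : ¬gammaPair (pathGraph 5) 2 i := by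
  rw [gammaPair_pathGraph_five]
  omega

theorem pathGraph_five_exists_notMem_closedNbr {g g' : Fin 5}
    (h : g' ∈ closedNbr (pathGraph 5) g) :
    ∃ k, k ∉ closedNbr (pathGraph 5) g ∧ k ∉ closedNbr (pathGraph 5) g' := by
  simp only [mem_closedNbr_pathGraph] at h ⊢
  revert g g'
  decide

variable {β : Type*} {H : SimpleGraph β}

theorem modularProduct_pathGraph_five_dist_le_two
    (hfar : ∀ a b : β, ∃ m, m ∉ closedNbr H a ∧ m ∉ closedNbr H b)
    (hext : ∀ a b : β, H.Adj a b → ∃ m, H.Adj b m ∧ m ∉ closedNbr H a)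
    {x y : Fin 5 × β} (hxy : ¬(gammaPair (pathGraph 5) x.1 y.1 ∧ x.2 = y.2)) :
    (modularProduct (pathGraph 5) H).dist x y ≤ 2 := by
  obtain ⟨p, hp⟩ := modularProduct_exists_walk_length_le_two
    (fun _ _ => pathGraph_five_exists_notMem_closedNbr) hfar hext hxy
  exact (dist_le p).trans hp

theorem modularProduct_pathGraph_five_dist_middle_le_two
    (hfar : ∀ a b : β, ∃ m, m ∉ closedNbr H a ∧ m ∉ closedNbr H b)
    (hext : ∀ a b : β, H.Adj a b → ∃ m, H.Adj b m ∧ m ∉ closedNbr H a) (c : β) (y : Fin 5 × β) :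
    (modularProduct (pathGraph 5) H).dist (2, c) y ≤ 2 :=
  modularProduct_pathGraph_five_dist_le_two hfar hext fun h => not_gammaPair_pathGraph_five_two _ h.1

theorem modularProduct_pathGraph_five_preconnected
    (hfar : ∀ a b : β, ∃ m, m ∉ closedNbr H a ∧ m ∉ closedNbr H b)
    (hext : ∀ a b : β, H.Adj a b → ∃ m, H.Adj b m ∧ m ∉ closedNbr H a) :
    (modularProduct (pathGraph 5) H).Preconnected := by
  intro x y
  obtain ⟨p, -⟩ := modularProduct_exists_walk_length_le_two (x := x) (y := (2, y.2))
    (fun _ _ => pathGraph_five_exists_notMem_closedNbr) hfar hext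
    fun h => not_gammaPair_pathGraph_five_two _ h.1.symm
  obtain ⟨q, -⟩ := modularProduct_exists_walk_length_le_two (x := (2, y.2)) (y := y)
    (fun _ _ => pathGraph_five_exists_notMem_closedNbr) hfar hext
    fun h => not_gammaPair_pathGraph_five_two _ h.1
  exact ⟨p.append q⟩

theorem modularProduct_pathGraph_five_dist_middle_of_notMem
    (hfar : ∀ a b : β, ∃ m, m ∉ closedNbr H a ∧ m ∉ closedNbr H b)
    (hext : ∀ a b : β, H.Adj a b → ∃ m, H.Adj b m ∧ m ∉ closedNbr H a)
    {a b : β} (hab : b ∉ closedNbr H a) :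
    (modularProduct (pathGraph 5) H).dist (2, a) (2, b) = 2 := by
  have hne : ((2 : Fin 5), a) ≠ (2, b) := fun e => hab ((Prod.mk.inj e).2 ▸ self_mem_closedNbr H a)
  have hnadj : ¬(modularProduct (pathGraph 5) H).Adj (2, a) (2, b) := fun hadj =>
    hab ((modularProduct_adj.1 hadj).2.1 (self_mem_closedNbr _ _))
  exact le_antisymm (modularProduct_pathGraph_five_dist_middle_le_two hfar hext a _)
    ((modularProduct_pathGraph_five_preconnected hfar hext _ _).one_lt_dist_of_ne_of_not_adj hne hnadj)

theorem modularProduct_pathGraph_five_dist_gammaPair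
    (hfar : ∀ a b : β, ∃ m, m ∉ closedNbr H a ∧ m ∉ closedNbr H b)
    (hext : ∀ a b : β, H.Adj a b → ∃ m, H.Adj b m ∧ m ∉ closedNbr H a)
    {i j : Fin 5} (hij : gammaPair (pathGraph 5) i j) (h : β) :
    (modularProduct (pathGraph 5) H).dist (i, h) (j, h) = 3 := by
  have hconn := modularProduct_pathGraph_five_preconnected hfar hext
  refine le_antisymm ?_ (hij.three_le_dist_modularProduct h (hconn _ _))
  obtain ⟨m, hm, -⟩ := hfar h h
  have hadj : (modularProduct (pathGraph 5) H).Adj (i, m) (j, h) :=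
    modularProduct_adj.2 ⟨fun e => hij.ne (Prod.mk.inj e).1,
      iff_of_false hij.notMem_closedNbr (mt mem_closedNbr_comm.1 hm)⟩
  calc (modularProduct (pathGraph 5) H).dist (i, h) (j, h)
      ≤ (modularProduct (pathGraph 5) H).dist (i, h) (i, m) +
        (modularProduct (pathGraph 5) H).dist (i, m) (j, h) := (hconn _ _).dist_triangle_left _
    _ ≤ 2 + 1 := add_le_add (modularProduct_pathGraph_five_dist_le_two hfar hext
        fun hg => hg.1.ne rfl) (dist_eq_one_iff_adj.2 hadj).le

theorem modularProduct_pathGraph_five_dist_add_dist_gammaPair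
    (hfar : ∀ a b : β, ∃ m, m ∉ closedNbr H a ∧ m ∉ closedNbr H b)
    (hext : ∀ a b : β, H.Adj a b → ∃ m, H.Adj b m ∧ m ∉ closedNbr H a)
    {i j : Fin 5} (hij : gammaPair (pathGraph 5) i j) (h : β) (v : Fin 5 × β) :
    (modularProduct (pathGraph 5) H).dist (i, h) v + (modularProduct (pathGraph 5) H).dist v (j, h) =
      (modularProduct (pathGraph 5) H).dist (i, h) (j, h) := by
  refine le_antisymm ?_
    ((modularProduct_pathGraph_five_preconnected hfar hext _ _).dist_triangle_left _)
  by_cases hvi : v = (i, h)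
  · simp [hvi]
  by_cases hvj : v = (j, h)
  · simp [hvj]
  rw [modularProduct_pathGraph_five_dist_gammaPair hfar hext hij h]
  rcases hij.adj_or_adj_modularProduct hvi hvj with hadj | hadj
  · rw [dist_eq_one_iff_adj.2 hadj]
    have := modularProduct_pathGraph_five_dist_le_two hfar hext (x := v) (y := (j, h))
      fun hv => hvi (Prod.ext (gammaPair_pathGraph_five_unique hij hv.1) hv.2)
    omega
  · rw [dist_eq_one_iff_adj.2 hadj]
    have := modularProduct_pathGraph_five_dist_le_two hfar hext (x := (i, h)) (y := v)
      fun hv => hvj (Prod.ext (gammaPair_pathGraph_five_unique hij.symm hv.1.symm) hv.2.symm)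
    omega

theorem modularProduct_pathGraph_five_dist_le_three
    (hfar : ∀ a b : β, ∃ m, m ∉ closedNbr H a ∧ m ∉ closedNbr H b)
    (hext : ∀ a b : β, H.Adj a b → ∃ m, H.Adj b m ∧ m ∉ closedNbr H a) (x y : Fin 5 × β) :
    (modularProduct (pathGraph 5) H).dist x y ≤ 3 := by
  obtain ⟨i, h⟩ := x
  obtain ⟨j, h'⟩ := y
  by_cases hxy : gammaPair (pathGraph 5) i j ∧ h = h'
  · obtain ⟨hij, rfl⟩ := hxy
    exact (modularProduct_pathGraph_five_dist_gammaPair hfar hext hij h).le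
  · exact (modularProduct_pathGraph_five_dist_le_two hfar hext hxy).trans (by norm_num)

end PathFive

section LowerBound

theorem SimpleGraph.CliqueFree.ncard_le_of_isClique {β : Type*} [Finite β] {H : SimpleGraph β}
    {n : ℕ} (hH : H.CliqueFree (n + 1)) {T : Set β} (hT : H.IsClique T) : T.ncard ≤ n := by
  by_contra! hn
  obtain ⟨t, htT, ht⟩ := Set.exists_subset_card_eq (n := n + 1) hn
  refine hH t.toFinite.toFinset ⟨by simpa using hT.subset htT, ?_⟩
  rw [← ht, Set.ncard_eq_toFinset_card t]

theorem ncard_sdiff_le_of_forall_mem_or_mem {α β : Type*} [Finite β] {S : Set (α × β)} {i j : α}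
    (hS : ∀ h, (i, h) ∈ S ∨ (j, h) ∈ S) :
    ({p : α × β | p.1 = i ∨ p.1 = j} \ S).ncard ≤ Nat.card β := by
  rw [← Set.ncard_univ]
  refine Set.ncard_le_ncard_of_injOn Prod.snd (fun _ _ => Set.mem_univ _) ?_
  rintro ⟨a, h⟩ ⟨ha, haS⟩ ⟨b, h'⟩ ⟨hb, hbS⟩ (rfl : h = h')
  rcases hS h with hi | hj <;> grind

theorem IsStrongResolvingSet.mem_or_mem {α : Type*} {X : SimpleGraph α} {S : Set α}
    (hS : IsStrongResolvingSet X S) (hX : X.Preconnected) {u v : α} (huv : u ≠ v)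
    (hu : ∀ w, X.dist u w ≤ X.dist u v) (hv : ∀ w, X.dist v w ≤ X.dist u v) : u ∈ S ∨ v ∈ S := by
  obtain ⟨w, hw, h | h⟩ := hS u v huv
  · have hvw : X.dist v w = 0 := by have := hu w; omega
    exact Or.inr ((hX v w).dist_eq_zero_iff.1 hvw ▸ hw)
  · rw [dist_comm (u := v) (v := u)] at h
    have huw : X.dist u w = 0 := by have := hv w; omega
    exact Or.inl ((hX u w).dist_eq_zero_iff.1 huw ▸ hw)

variable {β : Type*} {H : SimpleGraph β} {S : Set (Fin 5 × β)}

theorem IsStrongResolvingSet.mem_or_mem_of_gammaPair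
    (hfar : ∀ a b : β, ∃ m, m ∉ closedNbr H a ∧ m ∉ closedNbr H b)
    (hext : ∀ a b : β, H.Adj a b → ∃ m, H.Adj b m ∧ m ∉ closedNbr H a)
    (hS : IsStrongResolvingSet (modularProduct (pathGraph 5) H) S) {i j : Fin 5}
    (hij : gammaPair (pathGraph 5) i j) (h : β) : (i, h) ∈ S ∨ (j, h) ∈ S := by
  have h₃ := modularProduct_pathGraph_five_dist_gammaPair hfar hext hij h
  exact hS.mem_or_mem (modularProduct_pathGraph_five_preconnected hfar hext)
    (fun e => hij.ne (Prod.mk.inj e).1)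
    (fun w => h₃ ▸ modularProduct_pathGraph_five_dist_le_three hfar hext _ w)
    (fun w => h₃ ▸ modularProduct_pathGraph_five_dist_le_three hfar hext _ w)

theorem IsStrongResolvingSet.mem_or_mem_of_notMem_closedNbr
    (hfar : ∀ a b : β, ∃ m, m ∉ closedNbr H a ∧ m ∉ closedNbr H b)
    (hext : ∀ a b : β, H.Adj a b → ∃ m, H.Adj b m ∧ m ∉ closedNbr H a)
    (hS : IsStrongResolvingSet (modularProduct (pathGraph 5) H) S) {a b : β}
    (hab : b ∉ closedNbr H a) : ((2 : Fin 5), a) ∈ S ∨ ((2 : Fin 5), b) ∈ S := by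
  have h₂ := modularProduct_pathGraph_five_dist_middle_of_notMem hfar hext hab
  exact hS.mem_or_mem (modularProduct_pathGraph_five_preconnected hfar hext)
    (fun e => hab ((Prod.mk.inj e).2 ▸ self_mem_closedNbr H a))
    (fun w => h₂ ▸ modularProduct_pathGraph_five_dist_middle_le_two hfar hext a w)
    (fun w => h₂ ▸ modularProduct_pathGraph_five_dist_middle_le_two hfar hext b w)

theorem IsStrongResolvingSet.three_mul_card_sub_two_le_ncard [Finite β]
    (hfar : ∀ a b : β, ∃ m, m ∉ closedNbr H a ∧ m ∉ closedNbr H b)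
    (hext : ∀ a b : β, H.Adj a b → ∃ m, H.Adj b m ∧ m ∉ closedNbr H a) (hH : H.CliqueFree 3)
    (hS : IsStrongResolvingSet (modularProduct (pathGraph 5) H) S) :
    3 * Nat.card β - 2 ≤ S.ncard := by
  have h03 := hS.mem_or_mem_of_gammaPair hfar hext (i := 0) (j := 3)
    (gammaPair_pathGraph_five.2 (by decide))
  have h14 := hS.mem_or_mem_of_gammaPair hfar hext (i := 1) (j := 4)
    (gammaPair_pathGraph_five.2 (by decide))
  have hrow2 : H.IsClique {c | ((2 : Fin 5), c) ∉ S} := fun a ha b hb hab =>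
    (mem_closedNbr.1 (by_contra fun h =>
      (hS.mem_or_mem_of_notMem_closedNbr hfar hext h).elim ha hb)).resolve_left hab.symm
  have hcompl : Sᶜ ⊆ ({p | p.1 = 0 ∨ p.1 = 3} \ S) ∪ ({p | p.1 = 1 ∨ p.1 = 4} \ S) ∪
      Prod.mk 2 '' {c | ((2 : Fin 5), c) ∉ S} := by
    rintro ⟨i, c⟩ hp
    fin_cases i <;> simp_all
  have hsum := Set.ncard_add_ncard_compl S
  rw [Nat.card_prod, Nat.card_fin] at hsum
  have : Sᶜ.ncard ≤ Nat.card β + Nat.card β + 2 :=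
    calc Sᶜ.ncard
      _ ≤ _ := Set.ncard_le_ncard hcompl
      _ ≤ _ := (Set.ncard_union_le _ _).trans (add_le_add_left (Set.ncard_union_le _ _) _)
      _ ≤ _ := add_le_add (add_le_add (ncard_sdiff_le_of_forall_mem_or_mem h03)
          (ncard_sdiff_le_of_forall_mem_or_mem h14))
          ((Set.ncard_image_le).trans (hH.ncard_le_of_isClique hrow2))
  omega

end LowerBound

section UpperBound

variable {β : Type*} {H : SimpleGraph β}

theorem isStrongResolvingSet_modularProduct_pathGraph_five
    (hfar : ∀ a b : β, ∃ m, m ∉ closedNbr H a ∧ m ∉ closedNbr H b)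
    (hext : ∀ a b : β, H.Adj a b → ∃ m, H.Adj b m ∧ m ∉ closedNbr H a)
    {h₀ h₁ : β} (h01 : H.Adj h₀ h₁) :
    IsStrongResolvingSet (modularProduct (pathGraph 5) H)
      ((({0, 1, 2} : Set (Fin 5)) ×ˢ Set.univ) \ {(2, h₀), (2, h₁)}) := by
  set S : Set (Fin 5 × β) := (({0, 1, 2} : Set (Fin 5)) ×ˢ Set.univ) \ {(2, h₀), (2, h₁)}
  have hpartner : ∀ x ∉ S, x ∉ ({(2, h₀), (2, h₁)} : Set (Fin 5 × β)) →
      ∃ w ∈ S, ∀ v, (modularProduct (pathGraph 5) H).dist x w =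
        (modularProduct (pathGraph 5) H).dist x v + (modularProduct (pathGraph 5) H).dist v w := by
    rintro ⟨i, c⟩ hx hx'
    fin_cases i
    · simp_all [S]
    · simp_all [S]
    · simp_all [S]
    · exact ⟨(0, c), by simp [S], fun v => (modularProduct_pathGraph_five_dist_add_dist_gammaPair
        hfar hext (gammaPair_pathGraph_five.2 (by decide)) c v).symm⟩
    · exact ⟨(1, c), by simp [S], fun v => (modularProduct_pathGraph_five_dist_add_dist_gammaPair
        hfar hext (gammaPair_pathGraph_five.2 (by decide)) c v).symm⟩
  intro u v huv
  by_cases hu : u ∈ S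
  · exact ⟨u, hu, Or.inr (by simp)⟩
  by_cases hv : v ∈ S
  · exact ⟨v, hv, Or.inl (by simp)⟩
  by_cases hu' : u ∈ ({(2, h₀), (2, h₁)} : Set (Fin 5 × β))
  swap
  · obtain ⟨w, hw, hd⟩ := hpartner u hu hu'
    exact ⟨w, hw, Or.inl (hd v)⟩
  by_cases hv' : v ∈ ({(2, h₀), (2, h₁)} : Set (Fin 5 × β))
  swap
  · obtain ⟨w, hw, hd⟩ := hpartner v hv hv'
    exact ⟨w, hw, Or.inr (hd u)⟩
  obtain ⟨m, h₁m, hm⟩ := hext h₀ h₁ h01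
  have hm₀ : m ≠ h₀ := fun e => hm (e ▸ self_mem_closedNbr H h₀)
  have hmS : ((2 : Fin 5), m) ∈ S := by simp [S, hm₀, h₁m.ne']
  have key : (modularProduct (pathGraph 5) H).dist (2, h₀) (2, m) =
      (modularProduct (pathGraph 5) H).dist (2, h₀) (2, h₁) +
        (modularProduct (pathGraph 5) H).dist (2, h₁) (2, m) := by
    rw [modularProduct_pathGraph_five_dist_middle_of_notMem hfar hext hm,
      dist_eq_one_iff_adj.2 (modularProduct_adj.2 ⟨by simp [h01.ne], by simp [mem_closedNbr, h01]⟩),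
      dist_eq_one_iff_adj.2 (modularProduct_adj.2 ⟨by simp [h₁m.ne], by simp [mem_closedNbr, h₁m]⟩)]
  rcases hu' with rfl | rfl <;> rcases hv' with rfl | rfl
  · exact absurd rfl huv
  · exact ⟨_, hmS, Or.inl key⟩
  · exact ⟨_, hmS, Or.inr key⟩
  · exact absurd rfl huv

theorem ncard_prod_sdiff_pair {h₀ h₁ : β} (h01 : h₀ ≠ h₁) :
    ((({0, 1, 2} : Set (Fin 5)) ×ˢ Set.univ) \ {(2, h₀), (2, h₁)}).ncard = 3 * Nat.card β - 2 := by
  have hsub : ({(2, h₀), (2, h₁)} : Set (Fin 5 × β)) ⊆ ({0, 1, 2} : Set (Fin 5)) ×ˢ Set.univ := by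
    simp [Set.insert_subset_iff]
  rw [Set.ncard_sdiff hsub, Set.ncard_prod, Set.ncard_univ, Set.ncard_pair (by simpa using h01),
    Set.ncard_eq_three.2 ⟨0, 1, 2, by decide, by decide, by decide, rfl⟩]

end UpperBound

theorem sdim_eq_of_isStrongResolvingSet {α : Type*} {X : SimpleGraph α} {S : Set α}
    (hS : IsStrongResolvingSet X S) (hmin : ∀ T, IsStrongResolvingSet X T → S.ncard ≤ T.ncard) :
    sdim X = S.ncard :=
  le_antisymm (Nat.sInf_le ⟨S, rfl, hS⟩)
    (le_csInf ⟨_, S, rfl, hS⟩ fun _ ⟨T, hT, hTS⟩ => hT ▸ hmin T hTS)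

theorem sdim_modularProduct_pathGraph_five {β : Type*} [Finite β] {H : SimpleGraph β}
    (hfar : ∀ a b : β, ∃ m, m ∉ closedNbr H a ∧ m ∉ closedNbr H b)
    (hext : ∀ a b : β, H.Adj a b → ∃ m, H.Adj b m ∧ m ∉ closedNbr H a) (hH : H.CliqueFree 3)
    {h₀ h₁ : β} (h01 : H.Adj h₀ h₁) :
    sdim (modularProduct (pathGraph 5) H) = 3 * Nat.card β - 2 := by
  rw [← ncard_prod_sdiff_pair h01.ne]
  exact sdim_eq_of_isStrongResolvingSet
    (isStrongResolvingSet_modularProduct_pathGraph_five hfar hext h01) fun T hT =>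
      (ncard_prod_sdiff_pair h01.ne).trans_le (hT.three_mul_card_sub_two_le_ncard hfar hext hH)

section Cycle

open Fin.CommRing

variable {n : ℕ}

theorem mem_closedNbr_cycleGraph {a b : Fin (n + 2)} :
    b ∈ closedNbr (cycleGraph (n + 2)) a ↔ b = a - 1 ∨ b = a ∨ b = a + 1 := by
  rw [mem_closedNbr, cycleGraph_adj]
  grind

theorem cycleGraph_exists_notMem_closedNbr (a b : Fin (n + 7)) :
    ∃ m, m ∉ closedNbr (cycleGraph (n + 7)) a ∧ m ∉ closedNbr (cycleGraph (n + 7)) b := by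
  obtain ⟨m, -, hm⟩ := Finset.exists_mem_notMem_of_card_lt_card
    (s := {a - 1, a, a + 1, b - 1, b, b + 1}) (t := Finset.univ)
    (Finset.card_le_six.trans_lt (by simp))
  simp only [Finset.mem_insert, Finset.mem_singleton, not_or] at hm
  exact ⟨m, by simp only [mem_closedNbr_cycleGraph]; tauto⟩

theorem cycleGraph_exists_adj_notMem_closedNbr {a b : Fin (n + 5)}
    (hab : (cycleGraph (n + 5)).Adj a b) :
    ∃ m, (cycleGraph (n + 5)).Adj b m ∧ m ∉ closedNbr (cycleGraph (n + 5)) a := by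
  have h₂ : (2 : Fin (n + 5)) ≠ 0 := by
    simp [Fin.ext_iff, Nat.mod_eq_of_lt (show 2 < n + 5 by omega)]
  have h₃ : (3 : Fin (n + 5)) ≠ 0 := by
    simp [Fin.ext_iff, Nat.mod_eq_of_lt (show 3 < n + 5 by omega)]
  rw [cycleGraph_adj] at hab
  refine ⟨b + (b - a), ?_, ?_⟩
  · rw [cycleGraph_adj]
    grind
  · rw [mem_closedNbr_cycleGraph]
    grind

theorem cycleGraph_cliqueFree_three : (cycleGraph (n + 4)).CliqueFree 3 := by
  intro s hs
  obtain ⟨a, b, c, hab, hac, hbc, rfl⟩ := is3Clique_iff.1 hs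
  have h₃ : (3 : Fin (n + 4)) ≠ 0 := by
    simp [Fin.ext_iff, Nat.mod_eq_of_lt (show 3 < n + 4 by omega)]
  rw [cycleGraph_adj] at hab hac hbc
  grind

end Cycle

/-- the strong metric dimension of `P_5 ⋄ C_r` for `r ≥ 7`. -/
theorem sdim_path5_modularProduct_cycle (r : ℕ) (hr : 7 ≤ r) :
    sdim (modularProduct (pathGraph 5) (cycleGraph r)) = 3 * r - 2 := by
  obtain ⟨n, rfl⟩ : ∃ n, r = n + 7 := ⟨r - 7, by omega⟩
  rw [sdim_modularProduct_pathGraph_five cycleGraph_exists_notMem_closedNbr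
    (fun _ _ => cycleGraph_exists_adj_notMem_closedNbr (n := n + 2))
    (cycleGraph_cliqueFree_three (n := n + 3)) (h₀ := 0) (h₁ := 1) (by simp [cycleGraph_adj]),
    Nat.card_fin]
end
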